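/- Let α ∈ (0,1) and γ > 0. Define k(t) = e^{-γt} t^{-α}/Γ(1-α) and l(t) = e^{-γt} t^{α-1}/Γ(α) + γ ∫₀ᵗ e^{-γs} s^{α-1}/Γ(α) ds. Then (k ∗ l)(t) = 1 for all t > 0. -/

import Mathlib

open MeasureTheory Real Set intervalIntegral

namespace ConvKernelAux

lemma beta_val {α : ℝ} (hα : α ∈ Set.Ioo (0:ℝ) 1) :
    ∫ x in (0:ℝ)..1, x ^ (α-1) * (1-x) ^ (-α) = Gamma α * Gamma (1-α) := by
  obtain ⟨h0, h1⟩ := hα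
  have key := Complex.Gamma_mul_Gamma_eq_betaIntegral (s := (α:ℂ)) (t := ((1-α:ℝ):ℂ))
    (by simpa using h0) (by simpa using sub_pos.2 h1)
  have hsum : (α:ℂ) + ((1-α:ℝ):ℂ) = 1 := by push_cast; ring
  rw [hsum, Complex.Gamma_one, one_mul] at key
  have h2 : ((∫ x in (0:ℝ)..1, x ^ (α-1) * (1-x) ^ (-α) : ℝ) : ℂ)
      = ∫ x in (0:ℝ)..1, ((x ^ (α-1) * (1-x) ^ (-α) : ℝ) : ℂ) :=
    (RCLike.intervalIntegral_ofReal (f := fun x => x ^ (α-1) * (1-x) ^ (-α))).symm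
  have heq : Complex.betaIntegral (α:ℂ) ((1-α:ℝ):ℂ)
      = ((∫ x in (0:ℝ)..1, x ^ (α-1) * (1-x) ^ (-α) : ℝ) : ℂ) := by
    rw [Complex.betaIntegral, h2]
    refine intervalIntegral.integral_congr fun x hx => ?_
    rw [Set.uIcc_of_le (by norm_num)] at hx
    rw [Complex.ofReal_mul, Complex.ofReal_cpow hx.1,
      Complex.ofReal_cpow (by linarith [hx.2] : (0:ℝ) ≤ 1 - x)]
    push_cast; ring_nf
  rw [heq, Complex.Gamma_ofReal, Complex.Gamma_ofReal, ← Complex.ofReal_mul] at key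
  exact_mod_cast key.symm

lemma intInt_convPow {α : ℝ} (hα : α ∈ Set.Ioo (0:ℝ) 1) {v : ℝ} (hv : 0 < v) :
    IntervalIntegrable (fun τ => τ ^ (α-1) * (v-τ) ^ (-α)) volume 0 v := by
  obtain ⟨h0, h1⟩ := hα
  have part1 : IntervalIntegrable (fun τ => τ ^ (α-1) * (v-τ) ^ (-α)) volume 0 (v/2) := by
    refine (intervalIntegrable_rpow' (by linarith : (-1:ℝ) < α-1)).mul_continuousOn ?_
    refine (continuousOn_const.sub continuousOn_id).rpow_const fun x hx => Or.inl ?_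
    rw [Set.uIcc_of_le (by linarith)] at hx
    show v - x ≠ 0; exact ne_of_gt (by linarith [hx.2])
  have part2 : IntervalIntegrable (fun τ => τ ^ (α-1) * (v-τ) ^ (-α)) volume (v/2) v := by
    have h2 : IntervalIntegrable (fun x => (v - x) ^ (-α)) volume (v - v/2) (v - 0) :=
      (intervalIntegrable_rpow' (by linarith : (-1:ℝ) < -α) (a := v/2) (b := 0)).comp_sub_left v
    rw [show v - v/2 = v/2 by ring, sub_zero] at h2
    refine h2.continuousOn_mul ?_
    refine (continuousOn_id).rpow_const fun x hx => Or.inl ?_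
    rw [Set.uIcc_of_le (by linarith)] at hx
    show x ≠ 0; exact ne_of_gt (by linarith [hx.1])
  exact part1.trans part2

lemma conv_rpow {α : ℝ} (hα : α ∈ Set.Ioo (0:ℝ) 1) {v : ℝ} (hv : 0 < v) :
    ∫ τ in (0:ℝ)..v, τ ^ (α-1) * (v-τ) ^ (-α) = Gamma α * Gamma (1-α) := by
  obtain ⟨h0, h1⟩ := hα
  have key := smul_integral_comp_mul_left (a := (0:ℝ)) (b := 1)
    (fun τ => τ ^ (α-1) * (v-τ) ^ (-α)) v
  rw [mul_zero, mul_one] at key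
  rw [← key]
  have heq : ∀ x ∈ Set.uIcc (0:ℝ) 1, (v*x) ^ (α-1) * (v - v*x) ^ (-α)
      = v⁻¹ * (x ^ (α-1) * (1-x) ^ (-α)) := by
    intro x hx
    rw [Set.uIcc_of_le (by norm_num)] at hx
    rw [show v - v*x = v * (1-x) by ring, Real.mul_rpow hv.le hx.1,
      Real.mul_rpow hv.le (by linarith [hx.2]),
      show v ^ (α-1) * x ^ (α-1) * (v ^ (-α) * (1-x) ^ (-α))
        = (v ^ (α-1) * v ^ (-α)) * (x ^ (α-1) * (1-x) ^ (-α)) by ring,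
      ← Real.rpow_add hv, show α - 1 + -α = -1 by ring, Real.rpow_neg_one]
  rw [intervalIntegral.integral_congr heq, intervalIntegral.integral_const_mul,
    beta_val ⟨h0, h1⟩, smul_eq_mul]
  field_simp

variable {α γ : ℝ}

/-- pointwise identity -/
lemma pt (α γ v τ : ℝ) :
    (Real.exp (-γ*(v-τ)) * (v-τ) ^ (-α) / Gamma (1-α)) *
      (Real.exp (-γ*τ) * τ ^ (α-1) / Gamma α)
    = (Real.exp (-γ*v) / (Gamma (1-α) * Gamma α)) * (τ ^ (α-1) * (v-τ) ^ (-α)) := by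
  have h : Real.exp (-γ*(v-τ)) * Real.exp (-γ*τ) = Real.exp (-γ*v) := by
    rw [← Real.exp_add]; ring_nf
  linear_combination (τ ^ (α-1) * (v-τ) ^ (-α) / (Gamma (1-α) * Gamma α)) * h

lemma kf_eq (hα : α ∈ Set.Ioo (0:ℝ) 1) {v : ℝ} (hv : 0 < v) :
    ∫ τ in Set.Ioo (0:ℝ) v,
      (Real.exp (-γ*(v-τ)) * (v-τ) ^ (-α) / Gamma (1-α)) *
        (Real.exp (-γ*τ) * τ ^ (α-1) / Gamma α) = Real.exp (-γ*v) := by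
  simp_rw [pt]
  rw [MeasureTheory.integral_const_mul, ← integral_Ioc_eq_integral_Ioo,
    ← intervalIntegral.integral_of_le hv.le, conv_rpow hα hv]
  have g1 := Real.Gamma_pos_of_pos hα.1
  have g2 := Real.Gamma_pos_of_pos (by linarith [hα.2] : (0:ℝ) < 1 - α)
  field_simp

lemma integrable_kf (hα : α ∈ Set.Ioo (0:ℝ) 1) {v : ℝ} (hv : 0 < v) :
    IntegrableOn (fun τ =>
      (Real.exp (-γ*(v-τ)) * (v-τ) ^ (-α) / Gamma (1-α)) *
        (Real.exp (-γ*τ) * τ ^ (α-1) / Gamma α)) (Set.Ioo 0 v) := by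
  simp_rw [pt]
  exact (((intervalIntegrable_iff_integrableOn_Ioo_of_le hv.le).1
    (intInt_convPow hα hv))).const_mul _

lemma kf_eq' (hα : α ∈ Set.Ioo (0:ℝ) 1) {v : ℝ} (hv : 0 < v) :
    ∫ u in Set.Ioo (0:ℝ) v,
      (Real.exp (-γ*u) * u ^ (-α) / Gamma (1-α)) *
        (Real.exp (-γ*(v-u)) * (v-u) ^ (α-1) / Gamma α) = Real.exp (-γ*v) := by
  have hα' : (1-α) ∈ Set.Ioo (0:ℝ) 1 := ⟨by linarith [hα.2], by linarith [hα.1]⟩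
  rw [← kf_eq (γ := γ) hα' hv]
  refine setIntegral_congr_fun measurableSet_Ioo fun u hu => ?_
  rw [show (1:ℝ)-(1-α) = α by ring, show (1-α)-1 = -α by ring, show -(1-α) = α-1 by ring]
  ring

lemma integrable_kf' (hα : α ∈ Set.Ioo (0:ℝ) 1) {v : ℝ} (hv : 0 < v) :
    IntegrableOn (fun u =>
      (Real.exp (-γ*u) * u ^ (-α) / Gamma (1-α)) *
        (Real.exp (-γ*(v-u)) * (v-u) ^ (α-1) / Gamma α)) (Set.Ioo 0 v) := by
  have hα' : (1-α) ∈ Set.Ioo (0:ℝ) 1 := ⟨by linarith [hα.2], by linarith [hα.1]⟩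
  refine (integrable_kf (γ := γ) hα' hv).congr_fun ?_ measurableSet_Ioo
  intro u hu
  rw [show (1:ℝ)-(1-α) = α by ring, show (1-α)-1 = -α by ring, show -(1-α) = α-1 by ring]
  ring

end ConvKernelAux

open ConvKernelAux

/-- For `α ∈ (0,1)`, `γ > 0`, `k(t) = e^{-γt} t^{-α}/Γ(1-α)` and
`l(t) = e^{-γt} t^{α-1}/Γ(α) + γ ∫₀ᵗ e^{-γs} s^{α-1}/Γ(α) ds`, one has
`(k ∗ l)(t) = 1` for all `t > 0`. -/
theorem conv_exp_weighted_kernel_eq_one (α γ : ℝ) (hα : α ∈ Set.Ioo (0:ℝ) 1)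
    (hγ : 0 < γ) (t : ℝ) (ht : 0 < t) :
    ∫ τ in Set.Ioo (0:ℝ) t,
      (Real.exp (-γ * (t - τ)) * (t - τ) ^ (-α) / Real.Gamma (1 - α)) *
        (Real.exp (-γ * τ) * τ ^ (α - 1) / Real.Gamma α +
          γ * ∫ s in Set.Ioo (0:ℝ) τ, Real.exp (-γ * s) * s ^ (α - 1) / Real.Gamma α)
      = 1 := by
  obtain ⟨h0, h1⟩ := id hα
  have hΓα := Real.Gamma_pos_of_pos h0
  have hΓα' := Real.Gamma_pos_of_pos (by linarith : (0:ℝ) < 1 - α)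
  set k : ℝ → ℝ := fun u => Real.exp (-γ*u) * u ^ (-α) / Real.Gamma (1-α) with hk
  set f : ℝ → ℝ := fun s => Real.exp (-γ*s) * s ^ (α-1) / Real.Gamma α with hfd
  set F : ℝ → ℝ := fun b => ∫ s in Set.Ioo (0:ℝ) b, f s with hFd
  have fold1 : ∀ u : ℝ, Real.exp (-γ*u) * u ^ (-α) / Real.Gamma (1-α) = k u := fun _ => rfl
  have fold2 : ∀ s : ℝ, Real.exp (-γ*s) * s ^ (α-1) / Real.Gamma α = f s := fun _ => rfl
  have fold3 : ∀ b : ℝ, (∫ s in Set.Ioo (0:ℝ) b, f s) = F b := fun _ => rfl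
  simp_rw [fold2, fold3, fold1]
  -- basic facts
  have k_nonneg : ∀ u : ℝ, 0 ≤ u → 0 ≤ k u := by
    intro u hu; rw [hk]; positivity
  have f_nonneg : ∀ s : ℝ, 0 ≤ s → 0 ≤ f s := by
    intro s hs; rw [hfd]; positivity
  have mpow1 : Measurable fun x : ℝ => x ^ (-α) := by measurability
  have mpow2 : Measurable fun x : ℝ => x ^ (α-1) := by measurability
  have mexp : Measurable fun u : ℝ => Real.exp (-γ*u) :=
    Real.measurable_exp.comp (measurable_const.mul measurable_id)
  have k_meas : Measurable k := by rw [hk]; exact (mexp.mul mpow1).div_const _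
  have f_meas : Measurable f := by rw [hfd]; exact (mexp.mul mpow2).div_const _
  have f_int : ∀ b : ℝ, IntegrableOn f (Set.Ioo 0 b) := by
    intro b
    rcases le_or_gt b 0 with hb | hb
    · rw [Set.Ioo_eq_empty (by intro h; exact absurd (h.trans_le hb) (lt_irrefl 0))]
      exact integrableOn_empty
    · refine (intervalIntegrable_iff_integrableOn_Ioo_of_le hb.le).1 ?_
      have h := (intervalIntegrable_rpow' (by linarith : (-1:ℝ) < α-1)
        (a := 0) (b := b)).continuousOn_mul
        (g := fun s => Real.exp (-γ*s) / Real.Gamma α)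
        (((Real.continuous_exp.comp (continuous_const.mul continuous_id)).div_const _).continuousOn)
      have : f = fun x => Real.exp (-γ*x) / Real.Gamma α * x ^ (α-1) :=
        funext fun x => by rw [hfd]; ring
      rw [this]; exact h
  have F_mono : Monotone F := by
    intro b b' hbb'
    refine setIntegral_mono_set (f_int b') ?_ ?_
    · filter_upwards [ae_restrict_mem measurableSet_Ioo] with s hs using f_nonneg s hs.1.le
    · exact HasSubset.Subset.eventuallyLE (Set.Ioo_subset_Ioo_right hbb')
  have F_meas : Measurable F := F_mono.measurable
  have F_nonneg : ∀ b : ℝ, 0 ≤ F b := by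
    intro b
    exact setIntegral_nonneg measurableSet_Ioo fun s hs => f_nonneg s hs.1.le
  have ktau_int : IntegrableOn (fun τ => k (t - τ)) (Set.Ioo 0 t) := by
    refine (intervalIntegrable_iff_integrableOn_Ioo_of_le ht.le).1 ?_
    have hk_int : IntervalIntegrable k volume 0 t := by
      have h := (intervalIntegrable_rpow' (by linarith : (-1:ℝ) < -α)
        (a := 0) (b := t)).continuousOn_mul
        (g := fun s => Real.exp (-γ*s) / Real.Gamma (1-α))
        (((Real.continuous_exp.comp (continuous_const.mul continuous_id)).div_const _).continuousOn)
      have : k = fun x => Real.exp (-γ*x) / Real.Gamma (1-α) * x ^ (-α) :=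
        funext fun x => by rw [hk]; ring
      rw [this]; exact h
    have := (hk_int.comp_sub_left t).symm
    rw [sub_zero, sub_self] at this
    exact this
  have kF_int : IntegrableOn (fun τ => k (t - τ) * F τ) (Set.Ioo 0 t) := by
    refine Integrable.mono' (ktau_int.mul_const (F t))
      (((k_meas.comp (measurable_const.sub measurable_id)).mul F_meas).aestronglyMeasurable) ?_
    filter_upwards [ae_restrict_mem measurableSet_Ioo] with τ hτ
    have hk0 : 0 ≤ k (t - τ) := k_nonneg _ (by linarith [hτ.2])
    rw [Real.norm_eq_abs, abs_mul, abs_of_nonneg hk0, abs_of_nonneg (F_nonneg τ)]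
    exact mul_le_mul_of_nonneg_left (F_mono hτ.2.le) hk0
  -- split
  have hsplit : ∀ τ : ℝ, k (t-τ) * (f τ + γ * F τ) = k (t-τ) * f τ + γ * (k (t-τ) * F τ) :=
    fun τ => by ring
  simp_rw [hsplit]
  have h_kf_int : IntegrableOn (fun τ => k (t - τ) * f τ) (Set.Ioo 0 t) := by
    simp only [hk, hfd]; exact integrable_kf hα ht
  rw [integral_add h_kf_int (kF_int.const_mul γ), MeasureTheory.integral_const_mul]
  have e1 : ∫ τ in Set.Ioo (0:ℝ) t, k (t-τ) * f τ = Real.exp (-γ*t) := by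
    simp only [hk, hfd]; exact kf_eq hα ht
  rw [e1]
  -- reflection
  have e2 : ∫ τ in Set.Ioo (0:ℝ) t, k (t-τ) * F τ = ∫ u in Set.Ioo (0:ℝ) t, k u * F (t-u) := by
    rw [← integral_Ioc_eq_integral_Ioo, ← intervalIntegral.integral_of_le ht.le,
        ← integral_Ioc_eq_integral_Ioo, ← intervalIntegral.integral_of_le ht.le]
    have h := intervalIntegral.integral_comp_sub_left (a := (0:ℝ)) (b := t)
      (fun u => k u * F (t-u)) t
    rw [sub_self, sub_zero] at h
    rw [← h]
    refine intervalIntegral.integral_congr fun τ hτ => ?_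
    rw [sub_sub_cancel]
  rw [e2]
  -- Fubini step
  set μ : Measure ℝ := volume.restrict (Set.Ioo 0 t) with hμ
  set g : ℝ → ℝ → ℝ := fun v u => Set.indicator (Set.Ioo 0 v) (fun u => k u * f (v-u)) u
    with hg
  have hg_nonneg : ∀ v u, 0 ≤ g v u := by
    intro v u
    simp only [hg]
    by_cases h : u ∈ Set.Ioo 0 v
    · rw [Set.indicator_of_mem h]
      exact mul_nonneg (k_nonneg _ h.1.le) (f_nonneg _ (by linarith [h.2]))
    · rw [Set.indicator_of_notMem h]
  have hg_meas : AEStronglyMeasurable (Function.uncurry g) (μ.prod μ) := by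
    have hS : MeasurableSet {p : ℝ×ℝ | 0 < p.2 ∧ p.2 < p.1} :=
      (measurableSet_lt measurable_const measurable_snd).inter
        (measurableSet_lt measurable_snd measurable_fst)
    have hcore : Measurable (fun p : ℝ×ℝ => k p.2 * f (p.1 - p.2)) :=
      (k_meas.comp measurable_snd).mul (f_meas.comp (measurable_fst.sub measurable_snd))
    have hfun : Function.uncurry g
        = Set.indicator {p : ℝ×ℝ | 0 < p.2 ∧ p.2 < p.1} (fun p => k p.2 * f (p.1 - p.2)) := by
      ext ⟨v, u⟩
      simp only [Function.uncurry_apply_pair, hg, Set.indicator_apply, Set.mem_Ioo,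
        Set.mem_setOf_eq]
    rw [hfun]
    exact (hcore.indicator hS).aestronglyMeasurable
  have hslice : ∀ v ∈ Set.Ioo (0:ℝ) t, Integrable (g v) μ := by
    intro v hv
    rw [hg]
    rw [integrable_indicator_iff measurableSet_Ioo]
    unfold μ
    rw [IntegrableOn, Measure.restrict_restrict measurableSet_Ioo,
      Set.inter_eq_left.2 (Set.Ioo_subset_Ioo_right hv.2.le)]
    have : (fun u => k u * f (v - u)) = fun u =>
        (Real.exp (-γ*u) * u ^ (-α) / Real.Gamma (1-α)) *
        (Real.exp (-γ*(v-u)) * (v-u) ^ (α-1) / Real.Gamma α) := by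
      funext u; rw [hk, hfd]
    rw [this]
    exact integrable_kf' hα hv.1
  have hval : ∀ v ∈ Set.Ioo (0:ℝ) t, ∫ u, g v u ∂μ = Real.exp (-γ*v) := by
    intro v hv
    simp only [hg]
    rw [MeasureTheory.integral_indicator measurableSet_Ioo]
    unfold μ
    rw [Measure.restrict_restrict measurableSet_Ioo,
      Set.inter_eq_left.2 (Set.Ioo_subset_Ioo_right hv.2.le)]
    have : ∀ u : ℝ, k u * f (v - u) =
        (Real.exp (-γ*u) * u ^ (-α) / Real.Gamma (1-α)) *
        (Real.exp (-γ*(v-u)) * (v-u) ^ (α-1) / Real.Gamma α) := by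
      intro u; rw [hk, hfd]
    simp_rw [this]
    exact kf_eq' hα hv.1
  have hgint : Integrable (Function.uncurry g) (μ.prod μ) := by
    refine (integrable_prod_iff hg_meas).2 ⟨?_, ?_⟩
    · filter_upwards [ae_restrict_mem measurableSet_Ioo] with v hv using hslice v hv
    · have hexp : Integrable (fun v => Real.exp (-γ*v)) μ := by
        unfold μ
        exact ((Real.continuous_exp.comp (continuous_const.mul continuous_id)).integrableOn_Ioc
          (a := 0) (b := t)).mono_set Set.Ioo_subset_Ioc_self
      refine hexp.congr ?_
      filter_upwards [ae_restrict_mem measurableSet_Ioo] with v hv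
      have h1 : ∫ u, ‖g v u‖ ∂μ = ∫ u, g v u ∂μ :=
        integral_congr_ae (Filter.Eventually.of_forall fun u =>
          Real.norm_of_nonneg (hg_nonneg v u))
      simp only [Function.uncurry_apply_pair]
      rw [h1, hval v hv]
  have h_per_u : ∀ u ∈ Set.Ioo (0:ℝ) t, ∫ v, g v u ∂μ = k u * F (t-u) := by
    intro u hu
    have hind : (fun v => g v u) = Set.indicator (Set.Ioi u) (fun v => k u * f (v-u)) := by
      funext v
      simp only [hg, Set.indicator_apply, Set.mem_Ioo, Set.mem_Ioi]
      by_cases h : u < v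
      · simp [h, hu.1]
      · simp [h]
    rw [hind, MeasureTheory.integral_indicator measurableSet_Ioi]
    unfold μ
    rw [Measure.restrict_restrict measurableSet_Ioi,
      show Set.Ioi u ∩ Set.Ioo 0 t = Set.Ioo u t by
        ext v
        simp only [Set.mem_inter_iff, Set.mem_Ioi, Set.mem_Ioo]
        constructor
        · rintro ⟨a, _, c⟩; exact ⟨a, c⟩
        · rintro ⟨a, c⟩; exact ⟨a, hu.1.trans a, c⟩]
    rw [MeasureTheory.integral_const_mul]
    congr 1
    rw [← integral_Ioc_eq_integral_Ioo, ← intervalIntegral.integral_of_le hu.2.le]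
    have h := intervalIntegral.integral_comp_sub_right (a := u) (b := t) f u
    rw [sub_self] at h
    rw [h, intervalIntegral.integral_of_le (by linarith [hu.2] : (0:ℝ) ≤ t - u),
      integral_Ioc_eq_integral_Ioo]
  have e3 : ∫ u in Set.Ioo (0:ℝ) t, k u * F (t-u) = ∫ v in Set.Ioo (0:ℝ) t, Real.exp (-γ*v) := by
    calc ∫ u in Set.Ioo (0:ℝ) t, k u * F (t-u)
        = ∫ u, (∫ v, g v u ∂μ) ∂μ :=
          (setIntegral_congr_fun measurableSet_Ioo fun u hu => (h_per_u u hu).symm)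
      _ = ∫ v, (∫ u, g v u ∂μ) ∂μ := (integral_integral_swap hgint).symm
      _ = ∫ v in Set.Ioo (0:ℝ) t, Real.exp (-γ*v) :=
          setIntegral_congr_fun measurableSet_Ioo hval
  rw [e3]
  -- final computation
  have hexpint : ∫ v in Set.Ioo (0:ℝ) t, Real.exp (-γ*v)
      = (-γ)⁻¹ * (Real.exp (-γ*t) - 1) := by
    rw [← integral_Ioc_eq_integral_Ioo, ← intervalIntegral.integral_of_le ht.le]
    rw [intervalIntegral.integral_comp_mul_left (fun x => Real.exp x) (neg_ne_zero.2 hγ.ne')]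
    rw [mul_zero, integral_exp, Real.exp_zero, smul_eq_mul]
  rw [hexpint]
  rw [show γ * ((-γ)⁻¹ * (Real.exp (-γ*t) - 1)) = -(Real.exp (-γ*t) - 1) by
    rw [inv_neg]; field_simp]
  ring
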